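/- arXiv:2010.06317 — 2 statements merged into one kernel-verified Lean document; each statement's English description precedes it below -/
import Mathlib

section
/- Let D be a digraph with feedback vertex set F = {v_1,...,v_k} and let c be a k-coloring of the subdigraph induced by the closed neighborhood N[F] with c(v_i) = i. If for some i the set of vertices in N[F] \ F colored i having an arc into v_i is empty, or the set of those having an arc from v_i is empty, then extending c by coloring all of V(D) \ N[F] with color i yields a proper k-coloring of D. -/
/-!
A monochromatic cycle of color `j ≠ i` lies in `N[F]`, where `c` is proper. A cycle of color `i`
meets `F` at most in `v_i`, since a vertex `v_m ∈ F` keeps its color `m`; if it avoids `v_i` it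
lives in `D - F`, which is acyclic. A cycle through `v_i` enters `v_i` from a vertex of `V_{i,in}`
and leaves it towards a vertex of `V_{i,out}`: these neighbours lie in `N[F]`, carry color `i`,
and are not in `F` because `v_i` has no loop (a loop would be a cycle of color `i` in `N[F]`).
-/

/-- The subdigraph of the digraph with arc relation `A` induced by the vertex set `S`
is acyclic (contains no directed cycle). -/
def AcyclicOn {V : Type*} (A : V → V → Prop) (S : Set V) : Prop :=
  ∀ v ∈ S, ¬ Relation.TransGen (fun x y => x ∈ S ∧ y ∈ S ∧ A x y) v v

/-- The digraph with arc relation `A` is `k`-colorable: its vertices can be colored with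
`k` colors so that every color class induces an acyclic subdigraph. -/
def DiColorable {V : Type*} (A : V → V → Prop) (k : ℕ) : Prop :=
  ∃ c : V → Fin k, ∀ i : Fin k, AcyclicOn A {v | c v = i}

/-- The subdigraph induced by `S` is `k`-colorable. -/
def DiColorableOn {V : Type*} (A : V → V → Prop) (S : Set V) (k : ℕ) : Prop :=
  ∃ c : V → Fin k, ∀ i : Fin k, AcyclicOn A (S ∩ {v | c v = i})

/-- The closed neighborhood `N[S]` of a set `S` of vertices in a digraph: `S` together
with all vertices having an arc to or from a vertex of `S`. -/
def ClosedNbhd {V : Type*} (A : V → V → Prop) (S : Set V) : Set V :=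
  S ∪ {v | ∃ u ∈ S, A u v ∨ A v u}

/-- `V_{i,in}`: vertices of `N[F] \ F` colored `i` having an arc into `v_i = F i`. -/
def VinSet {V : Type*} {k : ℕ} (A : V → V → Prop) (F : Fin k → V)
    (c : V → Fin k) (i : Fin k) : Set V :=
  {v | v ∈ ClosedNbhd A (Set.range F) \ Set.range F ∧ c v = i ∧ A v (F i)}

/-- `V_{i,out}`: vertices of `N[F] \ F` colored `i` having an arc from `v_i = F i`. -/
def VoutSet {V : Type*} {k : ℕ} (A : V → V → Prop) (F : Fin k → V)
    (c : V → Fin k) (i : Fin k) : Set V :=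
  {v | v ∈ ClosedNbhd A (Set.range F) \ Set.range F ∧ c v = i ∧ A (F i) v}

namespace Relation.TransGen

variable {α : Type*} {r : α → α → Prop}

theorem avoid_or_through (w : α) {a b : α} (h : TransGen r a b) :
    TransGen (fun x y => r x y ∧ x ≠ w ∧ y ≠ w) a b ∨
      (ReflTransGen r a w ∧ ReflTransGen r w b) := by
  induction h with
  | @single b hab =>
    by_cases ha : a = w
    · exact .inr ⟨ha ▸ .refl, ha ▸ .single hab⟩
    by_cases hb : b = w
    · exact .inr ⟨hb ▸ .single hab, hb ▸ .refl⟩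
    · exact .inl (.single ⟨hab, ha, hb⟩)
  | @tail b d _ hbd ih =>
    rcases ih with hab | ⟨haw, hwb⟩
    · by_cases hd : d = w
      · have hab' : ReflTransGen r a b :=
          (Relation.TransGen.mono (fun _ _ h => h.1) _ _ hab).to_reflTransGen
        exact .inr ⟨hd ▸ hab'.tail hbd, hd ▸ .refl⟩
      · obtain ⟨_, -, -, -, hb⟩ := tail'_iff.mp hab
        exact .inl (hab.tail ⟨hbd, hb, hd⟩)
    · exact .inr ⟨haw, hwb.tail hbd⟩

end Relation.TransGen

section Acyclic

variable {V : Type*} {A : V → V → Prop}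

theorem AcyclicOn.mono {S T : Set V} (hT : AcyclicOn A T) (hST : S ⊆ T) : AcyclicOn A S :=
  fun v hv hcyc => hT v (hST hv)
    (Relation.TransGen.mono (fun _ _ ⟨hx, hy, hxy⟩ => ⟨hST hx, hST hy, hxy⟩) _ _ hcyc)

theorem AcyclicOn.not_rel_self {S : Set V} (hS : AcyclicOn A S) {v : V} (hv : v ∈ S) :
    ¬ A v v :=
  fun h => hS v hv (.single ⟨hv, hv, h⟩)

theorem AcyclicOn.of_diff_singleton {S : Set V} {w : V} (h : AcyclicOn A (S \ {w}))
    (hw : ¬ Relation.TransGen (fun x y => x ∈ S ∧ y ∈ S ∧ A x y) w w) : AcyclicOn A S := by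
  intro v hv hcyc
  by_cases hvw : v = w
  · exact hw (hvw ▸ hcyc)
  rcases hcyc.avoid_or_through w with hcyc' | ⟨hvw', hwv⟩
  · exact h v ⟨hv, hvw⟩ (Relation.TransGen.mono
      (fun _ _ ⟨⟨hx, hy, hxy⟩, hxw, hyw⟩ => ⟨⟨hx, hxw⟩, ⟨hy, hyw⟩, hxy⟩) _ _ hcyc')
  · obtain hwv | hwv := Relation.reflTransGen_iff_eq_or_transGen.mp hwv
    · exact hvw hwv
    · exact hw (hwv.trans_left hvw')

end Acyclic

section Extension

variable {V : Type*} {A : V → V → Prop} {k : ℕ} {F : Fin k → V} {c : V → Fin k} {i : Fin k}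

theorem eq_of_mem_range_of_color_eq (hcF : ∀ i, c (F i) = i) {x : V} (hx : x ∈ Set.range F)
    (hcx : c x = i) : x = F i := by
  obtain ⟨m, rfl⟩ := hx
  rw [← hcx, hcF]

theorem mem_vinSet_of_rel (hcF : ∀ i, c (F i) = i) (hloop : ¬ A (F i) (F i)) {x : V}
    (hcx : c x = i) (hx : A x (F i)) : x ∈ VinSet A F c i :=
  ⟨⟨.inr ⟨F i, Set.mem_range_self i, .inr hx⟩,
      fun hxF => hloop (eq_of_mem_range_of_color_eq hcF hxF hcx ▸ hx)⟩, hcx, hx⟩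

theorem mem_voutSet_of_rel (hcF : ∀ i, c (F i) = i) (hloop : ¬ A (F i) (F i)) {x : V}
    (hcx : c x = i) (hx : A (F i) x) : x ∈ VoutSet A F c i :=
  ⟨⟨.inr ⟨F i, Set.mem_range_self i, .inl hx⟩,
      fun hxF => hloop (eq_of_mem_range_of_color_eq hcF hxF hcx ▸ hx)⟩, hcx, hx⟩

theorem not_transGen_self_of_vinSet_or_voutSet_eq_empty (hcF : ∀ i, c (F i) = i)
    (hloop : ¬ A (F i) (F i)) (hempty : VinSet A F c i = ∅ ∨ VoutSet A F c i = ∅)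
    {c' : V → Fin k} (hc'in : ∀ v ∈ ClosedNbhd A (Set.range F), c' v = c v) :
    ¬ Relation.TransGen (fun x y => x ∈ {v | c' v = i} ∧ y ∈ {v | c' v = i} ∧ A x y)
      (F i) (F i) := by
  intro hcyc
  have hcolor : ∀ x, c' x = i → (A (F i) x ∨ A x (F i)) → c x = i := fun x hx hA =>
    hc'in x (.inr ⟨F i, Set.mem_range_self i, hA⟩) ▸ hx
  rcases hempty with hin | hout
  · obtain ⟨x, -, hx, -, hxF⟩ := Relation.TransGen.tail'_iff.mp hcyc
    exact hin.subset (mem_vinSet_of_rel hcF hloop (hcolor x hx (.inr hxF)) hxF)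
  · obtain ⟨x, ⟨-, hx, hFx⟩, -⟩ := Relation.TransGen.head'_iff.mp hcyc
    exact hout.subset (mem_voutSet_of_rel hcF hloop (hcolor x hx (.inl hFx)) hFx)

end Extension

theorem stmt9_general {V : Type*} (A : V → V → Prop) (k : ℕ) (F : Fin k → V)
    (hfvs : AcyclicOn A (Set.range F)ᶜ)
    (c : V → Fin k) (hcF : ∀ i, c (F i) = i)
    (hcol : ∀ j : Fin k, AcyclicOn A (ClosedNbhd A (Set.range F) ∩ {v | c v = j}))
    (i : Fin k)
    (hempty : VinSet A F c i = ∅ ∨ VoutSet A F c i = ∅)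
    (c' : V → Fin k)
    (hc'in : ∀ v ∈ ClosedNbhd A (Set.range F), c' v = c v)
    (hc'out : ∀ v ∉ ClosedNbhd A (Set.range F), c' v = i) :
    ∀ j : Fin k, AcyclicOn A {v | c' v = j} := by
  intro j
  by_cases hji : j = i
  · subst hji
    have hloop : ¬ A (F j) (F j) :=
      (hcol j).not_rel_self ⟨.inl (Set.mem_range_self j), hcF j⟩
    refine AcyclicOn.of_diff_singleton (hfvs.mono ?_)
      (not_transGen_self_of_vinSet_or_voutSet_eq_empty hcF hloop hempty hc'in)
    rintro x ⟨hx, hxF⟩ hxrange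
    exact hxF (eq_of_mem_range_of_color_eq hcF hxrange (hc'in x (.inl hxrange) ▸ hx))
  · refine (hcol j).mono fun x hx => ?_
    by_cases hxN : x ∈ ClosedNbhd A (Set.range F)
    · exact ⟨hxN, (hc'in x hxN).symm.trans hx⟩
    · exact absurd ((hc'out x hxN).symm.trans hx) (Ne.symm hji)

/-- Claim 6 of the paper: if for some `i` the set `V_{i,in}` or `V_{i,out}` is empty,
then extending the coloring `c` of `D[N[F]]` by giving all vertices outside `N[F]`
color `i` yields a proper `k`-coloring of `D`. -/
theorem stmt9 {V : Type*} (A : V → V → Prop) (k : ℕ) (F : Fin k → V)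
    (hFinj : Function.Injective F)
    (hfvs : AcyclicOn A (Set.range F)ᶜ)
    (c : V → Fin k) (hcF : ∀ i, c (F i) = i)
    (hcol : ∀ j : Fin k, AcyclicOn A (ClosedNbhd A (Set.range F) ∩ {v | c v = j}))
    (i : Fin k)
    (hempty : VinSet A F c i = ∅ ∨ VoutSet A F c i = ∅)
    (c' : V → Fin k)
    (hc'in : ∀ v ∈ ClosedNbhd A (Set.range F), c' v = c v)
    (hc'out : ∀ v ∉ ClosedNbhd A (Set.range F), c' v = i) :
    ∀ j : Fin k, AcyclicOn A {v | c' v = j} :=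
  stmt9_general A k F hfvs c hcF hcol i hempty c' hc'in hc'out
end

section
/- Let D be a digraph of maximum degree at most 4k-3 with feedback vertex set F = {v_1,...,v_k} inducing a bi-directed clique, and suppose the 2k sets V_{i,in}, V_{i,out} (defined from a proper k-coloring c of D[N[F]] with c(v_i)=i) are all nonempty. Then there exist indices i < j such that the number of arcs between {v_i, v_j} and V_{i,in} ∪ V_{i,out} ∪ V_{j,in} ∪ V_{j,out} whose endpoints have distinct colors is at most 3. -/
/-- The set `E_{i,j}` of cross arcs for the pair `(i, j)`: arcs with one endpoint in
`{v_i, v_j}` and the other in `V_{i,in} ∪ V_{i,out} ∪ V_{j,in} ∪ V_{j,out}`, whose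
endpoints have distinct colors. -/
def CrossArcs {V : Type*} {k : ℕ} (A : V → V → Prop) (F : Fin k → V)
    (c : V → Fin k) (i j : Fin k) : Set (V × V) :=
  {e | A e.1 e.2 ∧ c e.1 ≠ c e.2 ∧
    ((e.1 ∈ ({F i, F j} : Set V) ∧
       e.2 ∈ VinSet A F c i ∪ VoutSet A F c i ∪ VinSet A F c j ∪ VoutSet A F c j) ∨
     (e.2 ∈ ({F i, F j} : Set V) ∧
       e.1 ∈ VinSet A F c i ∪ VoutSet A F c i ∪ VinSet A F c j ∪ VoutSet A F c j))}

/-!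
Count the arcs at the vertices `v_i = F i`. Write `q i m` for the number of arcs between `v_i`
and `V_{m,in} ∪ V_{m,out}`. These sets are pairwise disjoint and disjoint from `F`, so besides
its `2(k-1)` clique arcs `v_i` has degree at least `∑ m, q i m`, where `q i i ≥ 2`. An arc of
`E_{i,j}` joins `v_i` to a vertex colored `j` or `v_j` to a vertex colored `i`, so
`|E_{i,j}| ≤ q i j + q j i`. If all `|E_{i,j}| ≥ 4`, then `q i j + q j i ≥ 4` for all `i, j`,
so `∑ q ≥ 2k²` and the degrees of `F` sum to at least `4k² - 2k > k(4k-3)`.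
-/

open Finset

section ArcCount

open scoped Classical

variable {V : Type*} (A : V → V → Prop)

noncomputable def arcCount (x : V) (S : Finset V) : ℕ :=
  #{u ∈ S | A x u} + #{u ∈ S | A u x}

def arcsBetween (x : V) (S : Finset V) : Set (V × V) :=
  {e | A e.1 e.2 ∧ (e.1 = x ∧ e.2 ∈ S ∨ e.2 = x ∧ e.1 ∈ S)}

variable {A}

lemma arcCount_mono {x : V} {S T : Finset V} (h : S ⊆ T) : arcCount A x S ≤ arcCount A x T :=
  add_le_add (card_le_card (filter_subset_filter _ h)) (card_le_card (filter_subset_filter _ h))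

lemma arcCount_union [DecidableEq V] {x : V} {S T : Finset V} (h : Disjoint S T) :
    arcCount A x (S ∪ T) = arcCount A x S + arcCount A x T := by
  simp only [arcCount, filter_union]
  rw [card_union_of_disjoint (disjoint_filter_filter h),
    card_union_of_disjoint (disjoint_filter_filter h)]
  ring

lemma arcCount_biUnion [DecidableEq V] {ι : Type*} {x : V} (s : Finset ι) (W : ι → Finset V)
    (h : (s : Set ι).PairwiseDisjoint W) :
    arcCount A x (s.biUnion W) = ∑ m ∈ s, arcCount A x (W m) := by
  have hf : ∀ p : V → Prop, [DecidablePred p] →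
      (s : Set ι).PairwiseDisjoint fun m => (W m).filter p :=
    fun p _ => h.mono fun m => filter_subset p (W m)
  simp only [arcCount, filter_biUnion, card_biUnion (hf _), sum_add_distrib]

lemma arcCount_univ [Fintype V] (x : V) :
    arcCount A x univ = {u | A x u}.ncard + {u | A u x}.ncard := by
  simp [arcCount, Set.ncard_eq_toFinset_card']

lemma arcCount_eq_two_mul_card {x : V} {S : Finset V} (h : ∀ u ∈ S, A x u ∧ A u x) :
    arcCount A x S = 2 * #S := by
  rw [arcCount, filter_true_of_mem fun u hu => (h u hu).1,
    filter_true_of_mem fun u hu => (h u hu).2]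
  ring

lemma two_le_arcCount {x a b : V} {S : Finset V} (ha : a ∈ S) (hax : A a x) (hb : b ∈ S)
    (hxb : A x b) : 2 ≤ arcCount A x S := by
  have hout : 0 < #{u ∈ S | A x u} := card_pos.2 ⟨b, mem_filter.2 ⟨hb, hxb⟩⟩
  have hin : 0 < #{u ∈ S | A u x} := card_pos.2 ⟨a, mem_filter.2 ⟨ha, hax⟩⟩
  unfold arcCount
  omega

lemma ncard_arcsBetween_le (x : V) (S : Finset V) :
    (arcsBetween A x S).ncard ≤ arcCount A x S := by
  have hsub : arcsBetween A x S ⊆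
      ↑(({u ∈ S | A x u}.image (x, ·)) ∪ {u ∈ S | A u x}.image (·, x)) := by
    rintro ⟨y, z⟩ ⟨hyz, ⟨rfl, hz⟩ | ⟨rfl, hy⟩⟩ <;> simp_all
  calc (arcsBetween A x S).ncard ≤ _ := Set.ncard_le_ncard hsub (finite_toSet _)
    _ ≤ _ := by
      rw [Set.ncard_coe_finset]
      exact (card_union_le _ _).trans (add_le_add card_image_le card_image_le)

end ArcCount

lemma card_mul_card_mul_le_two_mul_sum {ι : Type*} [Fintype ι] (q : ι → ι → ℕ) (b : ℕ)
    (h : ∀ i j, b ≤ q i j + q j i) :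
    Fintype.card ι * Fintype.card ι * b ≤ 2 * ∑ i, ∑ j, q i j :=
  calc Fintype.card ι * Fintype.card ι * b = ∑ _i : ι, ∑ _j : ι, b := by
        simp [card_univ, mul_assoc]
    _ ≤ ∑ i, ∑ j, (q i j + q j i) := sum_le_sum fun i _ => sum_le_sum fun j _ => h i j
    _ = 2 * ∑ i, ∑ j, q i j := by
        rw [two_mul]
        simp only [sum_add_distrib]
        rw [sum_comm (f := fun i j => q j i)]

section CrossArcs

open scoped Classical

variable {V : Type*} [Fintype V] {k : ℕ} (A : V → V → Prop) (F : Fin k → V) (c : V → Fin k)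

noncomputable def vinOut (m : Fin k) : Finset V :=
  {u | u ∈ VinSet A F c m ∪ VoutSet A F c m}

variable {A F c}

lemma mem_vinOut {m : Fin k} {u : V} :
    u ∈ vinOut A F c m ↔ u ∈ VinSet A F c m ∪ VoutSet A F c m := by
  simp [vinOut]

lemma color_eq_of_mem_vinOut {m : Fin k} {u : V} (hu : u ∈ vinOut A F c m) : c u = m := by
  rcases mem_vinOut.1 hu with h | h
  exacts [h.2.1, h.2.1]

lemma notMem_range_of_mem_vinOut {m : Fin k} {u : V} (hu : u ∈ vinOut A F c m) :
    u ∉ Set.range F := by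
  rcases mem_vinOut.1 hu with h | h
  exacts [h.1.2, h.1.2]

lemma pairwiseDisjoint_vinOut :
    ((univ : Finset (Fin k)) : Set (Fin k)).PairwiseDisjoint (vinOut A F c) :=
  fun _ _ _ _ hmn => disjoint_left.2 fun _ hm hn =>
    hmn ((color_eq_of_mem_vinOut hm).symm.trans (color_eq_of_mem_vinOut hn))

lemma crossArcs_subset (hcF : ∀ i, c (F i) = i) (i j : Fin k) :
    CrossArcs A F c i j ⊆ arcsBetween A (F i) (vinOut A F c j) ∪
      arcsBetween A (F j) (vinOut A F c i) := by
  have hmem : ∀ {w}, w ∈ VinSet A F c i ∪ VoutSet A F c i ∪ VinSet A F c j ∪ VoutSet A F c j →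
      w ∈ vinOut A F c i ∨ w ∈ vinOut A F c j := by
    intro w hw
    simp only [mem_vinOut]
    rcases hw with ((h | h) | h) | h <;> simp [h]
  rintro ⟨x, y⟩ ⟨hxy, hcxy, ⟨hx, hy⟩ | ⟨hy, hx⟩⟩
  · rcases hx with rfl | rfl <;> rcases hmem hy with h | h <;>
      simp_all [arcsBetween, color_eq_of_mem_vinOut h]
  · rcases hy with rfl | rfl <;> rcases hmem hx with h | h <;>
      simp_all [arcsBetween, color_eq_of_mem_vinOut h]

lemma ncard_crossArcs_le (hcF : ∀ i, c (F i) = i) (i j : Fin k) :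
    (CrossArcs A F c i j).ncard ≤
      arcCount A (F i) (vinOut A F c j) + arcCount A (F j) (vinOut A F c i) :=
  calc (CrossArcs A F c i j).ncard
      ≤ (arcsBetween A (F i) (vinOut A F c j) ∪ arcsBetween A (F j) (vinOut A F c i)).ncard :=
        Set.ncard_le_ncard (crossArcs_subset hcF i j) (Set.toFinite _)
    _ ≤ _ := (Set.ncard_union_le _ _).trans
        (add_le_add (ncard_arcsBetween_le _ _) (ncard_arcsBetween_le _ _))

lemma two_le_arcCount_vinOut {i : Fin k}
    (hne : (VinSet A F c i).Nonempty ∧ (VoutSet A F c i).Nonempty) :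
    2 ≤ arcCount A (F i) (vinOut A F c i) := by
  obtain ⟨⟨a, ha⟩, ⟨b, hb⟩⟩ := hne
  exact two_le_arcCount (mem_vinOut.2 (.inl ha)) ha.2.2 (mem_vinOut.2 (.inr hb)) hb.2.2

lemma sum_arcCount_vinOut_le_degree (hFinj : Function.Injective F)
    (hclique : ∀ i j : Fin k, i ≠ j → A (F i) (F j)) (i : Fin k) :
    2 * (k - 1) + ∑ m, arcCount A (F i) (vinOut A F c m) ≤
      {u | A (F i) u}.ncard + {u | A u (F i)}.ncard := by
  set others := (univ.erase i).image F
  have h_others : arcCount A (F i) others = 2 * (k - 1) := by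
    rw [arcCount_eq_two_mul_card, card_image_of_injective _ hFinj, card_erase_of_mem (mem_univ i),
      card_univ, Fintype.card_fin]
    simp only [others, mem_image, mem_erase]
    rintro _ ⟨j, ⟨hji, -⟩, rfl⟩
    exact ⟨hclique i j hji.symm, hclique j i hji⟩
  have h_disj : Disjoint others (univ.biUnion (vinOut A F c)) := by
    simp only [others, disjoint_left, mem_image, mem_biUnion]
    rintro _ ⟨j, -, rfl⟩ ⟨m, -, hm⟩
    exact notMem_range_of_mem_vinOut hm ⟨j, rfl⟩
  calc 2 * (k - 1) + ∑ m, arcCount A (F i) (vinOut A F c m)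
      = arcCount A (F i) (others ∪ univ.biUnion (vinOut A F c)) := by
        rw [arcCount_union h_disj, arcCount_biUnion _ _ pairwiseDisjoint_vinOut, h_others]
    _ ≤ arcCount A (F i) univ := arcCount_mono (subset_univ _)
    _ = _ := arcCount_univ _

end CrossArcs

theorem stmt11_general {V : Type*} [Fintype V] (A : V → V → Prop) (k : ℕ) (hk : 2 ≤ k)
    (F : Fin k → V) (hFinj : Function.Injective F)
    (hclique : ∀ i j : Fin k, i ≠ j → A (F i) (F j))
    (hdeg : ∀ v : V, {u | A v u}.ncard + {u | A u v}.ncard ≤ 4 * k - 3)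
    (c : V → Fin k) (hcF : ∀ i, c (F i) = i)
    (hne : ∀ i : Fin k, (VinSet A F c i).Nonempty ∧ (VoutSet A F c i).Nonempty) :
    ∃ i j : Fin k, i < j ∧ (CrossArcs A F c i j).ncard ≤ 3 := by
  by_contra! h_many
  let q (i m : Fin k) : ℕ := arcCount A (F i) (vinOut A F c m)
  have h_pair : ∀ i j, 4 ≤ q i j + q j i := by
    simp only [q]
    intro i j
    rcases lt_trichotomy i j with hij | rfl | hji
    · exact (h_many i j hij).trans_le (ncard_crossArcs_le hcF i j)
    · have := two_le_arcCount_vinOut (hne i)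
      omega
    · have := (h_many j i hji).trans_le (ncard_crossArcs_le hcF j i)
      omega
  have h_sum_lower := card_mul_card_mul_le_two_mul_sum q 4 h_pair
  have h_sum_deg : ∑ i, (2 * (k - 1) + ∑ m, q i m) ≤ ∑ _i : Fin k, (4 * k - 3) :=
    sum_le_sum fun i _ => (sum_arcCount_vinOut_le_degree hFinj hclique i).trans (hdeg (F i))
  simp only [sum_add_distrib, sum_const, card_univ, Fintype.card_fin, smul_eq_mul]
    at h_sum_deg h_sum_lower
  zify [show 1 ≤ k by omega, show 3 ≤ 4 * k by omega] at h_sum_deg h_sum_lower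
  linarith

/-- If the digraph has maximum degree at most `4k - 3`, `F` is a feedback vertex set
inducing a bi-directed clique, `c` is a proper `k`-coloring of `D[N[F]]` with
`c(v_i) = i`, and all the sets `V_{i,in}, V_{i,out}` are nonempty, then there are
indices `i < j` with at most `3` cross arcs. -/
theorem stmt11 {V : Type*} [Fintype V] (A : V → V → Prop) (k : ℕ) (hk : 2 ≤ k)
    (F : Fin k → V) (hFinj : Function.Injective F)
    (hclique : ∀ i j : Fin k, i ≠ j → A (F i) (F j))
    (hfvs : AcyclicOn A (Set.range F)ᶜ)
    (hdeg : ∀ v : V, {u | A v u}.ncard + {u | A u v}.ncard ≤ 4 * k - 3)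
    (c : V → Fin k) (hcF : ∀ i, c (F i) = i)
    (hcol : ∀ j : Fin k, AcyclicOn A (ClosedNbhd A (Set.range F) ∩ {v | c v = j}))
    (hne : ∀ i : Fin k, (VinSet A F c i).Nonempty ∧ (VoutSet A F c i).Nonempty) :
    ∃ i j : Fin k, i < j ∧ (CrossArcs A F c i j).ncard ≤ 3 :=
  stmt11_general A k hk F hFinj hclique hdeg c hcF hne
end
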